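/- Let (X, ρ) be a probability space with a jointly measurable measure-preserving semiflow (σ_τ)_{τ≥0}, and let E ⊆ X be measurable. Let S_E⁺ be the set of x for which the mean sojourn time in E exists and is positive, and S_E⁰ the set where it exists and equals 0. Then the function x ↦ lim_{T→∞} (1/T)∫₀^T χ_{E \ S_E⁺}(σ_t x) dt vanishes ρ-almost everywhere on S_E⁰ ∪ S_E⁺, and consequently ρ(E \ S_E⁺) = 0. -/

import Mathlib

/-!
The mean sojourn time in `E` exists `ρ`-a.e. by Birkhoff's pointwise ergodic theorem, applied to
the time-one map `σ 1` and the bounded function `x ↦ ∫₀¹ χ_E (σ t x) dt`, whose Birkhoff sums are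
the integrals `∫₀ⁿ χ_E (σ t x) dt`. Birkhoff's theorem for bounded functions follows from Garsia's
maximal ergodic inequality, which forces the invariant set where the averages oscillate across
`a < b` to satisfy `b ρ(G) ≤ ∫_G f ≤ a ρ(G)`, hence to be null. So a.e. point lies in
`S_E⁰ ∪ S_E⁺`. On `S_E⁰` the sojourn time in `E \ S_E⁺` is dominated by that in `E`, and `S_E⁺` is
forward invariant, so an orbit starting there never enters `E \ S_E⁺`. Hence the averages of
`χ_{E \ S_E⁺}` tend to `0` a.e.; by invariance of `ρ` their integrals all equal `ρ (E \ S_E⁺)`, and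
dominated convergence gives `ρ (E \ S_E⁺) = 0`.
-/

open MeasureTheory Filter Set Topology

noncomputable def timeAverage (h : ℝ → ℝ) (T : ℝ) : ℝ :=
  1 / T * ∫ t in (0:ℝ)..T, h t

lemma mul_timeAverage (h : ℝ → ℝ) (T : ℝ) :
    T * timeAverage h T = ∫ t in (0:ℝ)..T, h t := by
  rcases eq_or_ne T 0 with rfl | hT
  · simp
  · rw [timeAverage, ← mul_assoc, mul_one_div_cancel hT, one_mul]

section TimeAverage

variable {h : ℝ → ℝ}

lemma intervalIntegrable_of_norm_le {C : ℝ} (hm : Measurable h) (hC : ∀ t, ‖h t‖ ≤ C)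
    (a b : ℝ) : IntervalIntegrable h volume a b :=
  (intervalIntegrable_const (c := C)).mono_fun' hm.aestronglyMeasurable
    (Eventually.of_forall hC)

lemma tendsto_timeAverage_comp_add_const (hi : ∀ a b, IntervalIntegrable h volume a b)
    (s : ℝ) {ℓ : ℝ} (hℓ : Tendsto (timeAverage h) atTop (𝓝 ℓ)) :
    Tendsto (timeAverage fun t => h (t + s)) atTop (𝓝 ℓ) := by
  have hshift : ∀ T, T * timeAverage (fun t => h (t + s)) T
      = (T + s) * timeAverage h (T + s) - ∫ t in (0:ℝ)..s, h t := by
    intro T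
    rw [mul_timeAverage, mul_timeAverage, intervalIntegral.integral_comp_add_right,
      zero_add, intervalIntegral.integral_interval_sub_left (hi 0 _) (hi 0 _)]
  have hratio : Tendsto (fun T : ℝ => 1 + s / T) atTop (𝓝 1) := by
    simpa using tendsto_const_nhds.add (tendsto_const_nhds.div_atTop (tendsto_id (α := ℝ)))
  have hinit : Tendsto (fun T : ℝ => (∫ t in (0:ℝ)..s, h t) / T) atTop (𝓝 0) :=
    tendsto_const_nhds.div_atTop tendsto_id
  have hlim :=
    (hratio.mul (hℓ.comp (tendsto_atTop_add_const_right atTop s tendsto_id))).sub hinit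
  rw [one_mul, sub_zero] at hlim
  refine hlim.congr' ?_
  filter_upwards [eventually_gt_atTop 0] with T hT
  rw [← mul_right_inj' hT.ne', hshift]
  simp only [Function.comp_apply, id]
  field_simp

lemma tendsto_timeAverage_of_tendsto_nat {C : ℝ} (hm : Measurable h) (hC : ∀ t, ‖h t‖ ≤ C)
    {ℓ : ℝ} (hℓ : Tendsto (fun n : ℕ => timeAverage h n) atTop (𝓝 ℓ)) :
    Tendsto (timeAverage h) atTop (𝓝 ℓ) := by
  have hfloor : Tendsto (fun T : ℝ => (⌊T⌋₊ / T) * timeAverage h ⌊T⌋₊) atTop (𝓝 ℓ) := by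
    simpa using tendsto_nat_floor_div_atTop.mul (hℓ.comp tendsto_nat_floor_atTop)
  -- the remainder is the average of `h` over `[⌊T⌋, T]`, an interval of length at most one
  have hrem : ∀ᶠ T : ℝ in atTop,
      ‖timeAverage h T - (⌊T⌋₊ / T) * timeAverage h ⌊T⌋₊‖ ≤ C / T := by
    filter_upwards [eventually_gt_atTop 0] with T hT
    have hfl : T - ⌊T⌋₊ ≤ 1 := by linarith [Nat.lt_floor_add_one T]
    have hsplit : timeAverage h T - (⌊T⌋₊ / T) * timeAverage h ⌊T⌋₊
        = (∫ t in (⌊T⌋₊ : ℝ)..T, h t) / T := by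
      rw [← intervalIntegral.integral_interval_sub_left (intervalIntegrable_of_norm_le hm hC _ _)
        (intervalIntegrable_of_norm_le hm hC _ _), ← mul_timeAverage, ← mul_timeAverage]
      field_simp
    rw [hsplit, norm_div, Real.norm_of_nonneg hT.le]
    gcongr
    calc ‖∫ t in (⌊T⌋₊ : ℝ)..T, h t‖ ≤ C * |T - ⌊T⌋₊| :=
          intervalIntegral.norm_integral_le_of_norm_le_const fun t _ => hC t
      _ ≤ C := by
          rw [abs_of_nonneg (by linarith [Nat.floor_le hT.le])]
          nlinarith [(norm_nonneg _).trans (hC 0)]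
  have hzero := squeeze_zero_norm' hrem (tendsto_const_nhds.div_atTop tendsto_id)
  simpa using hfloor.add hzero

lemma tendsto_timeAverage_iff_tendsto_nat {C : ℝ} (hm : Measurable h) (hC : ∀ t, ‖h t‖ ≤ C)
    {ℓ : ℝ} :
    Tendsto (timeAverage h) atTop (𝓝 ℓ) ↔
      Tendsto (fun n : ℕ => timeAverage h n) atTop (𝓝 ℓ) :=
  ⟨fun hℓ => hℓ.comp tendsto_natCast_atTop_atTop, tendsto_timeAverage_of_tendsto_nat hm hC⟩

lemma tendsto_timeAverage_zero_of_le {h' : ℝ → ℝ} (hi : ∀ a b, IntervalIntegrable h volume a b)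
    (hi' : ∀ a b, IntervalIntegrable h' volume a b) (h0 : ∀ t, 0 ≤ t → 0 ≤ h t)
    (hle : ∀ t, 0 ≤ t → h t ≤ h' t) (h'0 : Tendsto (timeAverage h') atTop (𝓝 0)) :
    Tendsto (timeAverage h) atTop (𝓝 0) := by
  refine tendsto_of_tendsto_of_tendsto_of_le_of_le' tendsto_const_nhds h'0 ?_ ?_ <;>
    filter_upwards [eventually_gt_atTop 0] with T hT <;> unfold timeAverage
  · exact mul_nonneg (by positivity)
      (intervalIntegral.integral_nonneg hT.le fun t ht => h0 t ht.1)
  · exact mul_le_mul_of_nonneg_left (intervalIntegral.integral_mono_on hT.le (hi 0 T) (hi' 0 T)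
      fun t ht => hle t ht.1) (by positivity)

end TimeAverage

section LimsupOfTendstoSub

variable {ι : Type*} {F : Filter ι} [F.NeBot] {u v : ι → ℝ}

lemma limsup_le_limsup_of_tendsto_sub (hv : IsBoundedUnder (· ≤ ·) F v)
    (hv' : IsBoundedUnder (· ≥ ·) F v) (h : Tendsto (u - v) F (𝓝 0)) :
    limsup u F ≤ limsup v F :=
  calc limsup u F = limsup (v + (u - v)) F := by rw [add_sub_cancel]
    _ ≤ limsup v F + limsup (u - v) F :=
        limsup_add_le hv' hv h.isBoundedUnder_ge.isCoboundedUnder_le h.isBoundedUnder_le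
    _ = limsup v F := by rw [h.limsup_eq, add_zero]

lemma liminf_le_liminf_of_tendsto_sub (hu : IsBoundedUnder (· ≤ ·) F u)
    (hu' : IsBoundedUnder (· ≥ ·) F u) (h : Tendsto (u - v) F (𝓝 0)) :
    liminf u F ≤ liminf v F := by
  have h' : Tendsto (v - u) F (𝓝 0) := by rw [← neg_sub, ← neg_zero]; exact h.neg
  calc liminf u F = liminf u F + liminf (v - u) F := by rw [h'.liminf_eq, add_zero]
    _ ≤ liminf (u + (v - u)) F :=
        le_liminf_add hu' hu h'.isBoundedUnder_ge h'.isBoundedUnder_le.isCoboundedUnder_ge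
    _ = liminf v F := by rw [add_sub_cancel]

end LimsupOfTendstoSub

section BirkhoffMax

variable {α : Type*}

-- `birkhoffMax T g n x = max_{k ≤ n} birkhoffSum T g k x`
noncomputable def birkhoffMax (T : α → α) (g : α → ℝ) : ℕ → α → ℝ
  | 0 => 0
  | n + 1 => fun x => max 0 (g x + birkhoffMax T g n (T x))

variable (T : α → α) (g : α → ℝ)

lemma birkhoffMax_zero : birkhoffMax T g 0 = 0 := rfl

lemma birkhoffMax_succ (n : ℕ) (x : α) :
    birkhoffMax T g (n + 1) x = max 0 (g x + birkhoffMax T g n (T x)) := rfl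

lemma birkhoffMax_nonneg (n : ℕ) (x : α) : 0 ≤ birkhoffMax T g n x := by
  cases n with
  | zero => rfl
  | succ n => exact le_max_left _ _

lemma birkhoffMax_le_succ (n : ℕ) (x : α) : birkhoffMax T g n x ≤ birkhoffMax T g (n + 1) x := by
  induction n generalizing x with
  | zero => exact birkhoffMax_nonneg T g 1 x
  | succ n ih => exact max_le_max le_rfl (add_le_add le_rfl (ih (T x)))

lemma monotone_birkhoffMax : Monotone (birkhoffMax T g) :=
  monotone_nat_of_le_succ fun n x => birkhoffMax_le_succ T g n x

lemma birkhoffSum_le_birkhoffMax {k n : ℕ} (hkn : k ≤ n) (x : α) :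
    birkhoffSum T g k x ≤ birkhoffMax T g n x := by
  induction n generalizing k x with
  | zero => simp [Nat.le_zero.mp hkn, birkhoffMax_zero]
  | succ n ih =>
    rcases k with _ | k
    · exact (birkhoffSum_zero T g x).trans_le (birkhoffMax_nonneg T g _ x)
    · rw [birkhoffSum_succ', birkhoffMax_succ]
      exact le_max_of_le_right (add_le_add le_rfl (ih (Nat.le_of_succ_le_succ hkn) (T x)))

lemma exists_birkhoffMax_eq_birkhoffSum (n : ℕ) (x : α) :
    ∃ k ≤ n, birkhoffMax T g n x = birkhoffSum T g k x := by
  induction n generalizing x with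
  | zero => exact ⟨0, le_rfl, rfl⟩
  | succ n ih =>
    obtain ⟨k, hkn, hk⟩ := ih (T x)
    rcases max_choice 0 (g x + birkhoffMax T g n (T x)) with h | h
    · exact ⟨0, Nat.zero_le _, by rw [birkhoffMax_succ, h, birkhoffSum_zero]⟩
    · exact ⟨k + 1, by omega, by rw [birkhoffMax_succ, h, hk, birkhoffSum_succ']⟩

lemma iUnion_birkhoffMax_pos :
    ⋃ n, {x | 0 < birkhoffMax T g (n + 1) x} = {x | ∃ n, 0 < birkhoffSum T g (n + 1) x} := by
  ext x
  simp only [mem_iUnion, mem_ofPred_eq]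
  constructor
  · rintro ⟨n, hn⟩
    obtain ⟨_ | k, -, hk⟩ := exists_birkhoffMax_eq_birkhoffSum T g (n + 1) x
    · simp [hk, birkhoffSum_zero] at hn
    · exact ⟨k, hk ▸ hn⟩
  · rintro ⟨n, hn⟩
    exact ⟨n, hn.trans_le (birkhoffSum_le_birkhoffMax T g le_rfl x)⟩

variable [MeasurableSpace α] {T g}

lemma measurable_birkhoffMax (hT : Measurable T) (hg : Measurable g) (n : ℕ) :
    Measurable (birkhoffMax T g n) := by
  induction n with
  | zero => exact measurable_const
  | succ n ih => exact measurable_const.max (hg.add (ih.comp hT))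

lemma integrable_birkhoffMax {μ : Measure α} (hT : MeasurePreserving T μ μ)
    (hg : Integrable g μ) (n : ℕ) : Integrable (birkhoffMax T g n) μ := by
  induction n with
  | zero => exact integrable_zero _ _ _
  | succ n ih =>
    exact (hg.add (hT.integrable_comp_of_integrable ih)).pos_part.congr
      (Eventually.of_forall fun x => max_comm _ _)

end BirkhoffMax

section BirkhoffAverage

variable {α M : Type*} {T : α → α}

lemma birkhoffSum_indicator [AddCommMonoid M] {G : Set α} (hG : T ⁻¹' G = G) (g : α → M)
    (n : ℕ) (x : α) : birkhoffSum T (G.indicator g) n x = G.indicator (birkhoffSum T g n) x := by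
  have hmem : ∀ k, T^[k] x ∈ G ↔ x ∈ G := fun k => by
    rw [← mem_preimage, preimage_iterate_eq, Function.iterate_fixed hG]
  by_cases hx : x ∈ G
  · rw [indicator_of_mem hx]
    exact Finset.sum_congr rfl fun k _ => indicator_of_mem ((hmem k).2 hx) _
  · rw [indicator_of_notMem hx]
    exact Finset.sum_eq_zero fun k _ => indicator_of_notMem (mt (hmem k).1 hx) _

lemma norm_birkhoffAverage_le [SeminormedAddCommGroup M] [NormedSpace ℝ M] {f : α → M} {C : ℝ}
    (hC : ∀ x, ‖f x‖ ≤ C) (n : ℕ) (x : α) : ‖birkhoffAverage ℝ T f n x‖ ≤ C := by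
  rcases Nat.eq_zero_or_pos n with rfl | hn
  · simpa [birkhoffAverage_zero] using (norm_nonneg _).trans (hC x)
  have hsum : ‖birkhoffSum T f n x‖ ≤ n * C := by
    simpa [birkhoffSum] using norm_sum_le_of_le (Finset.range n) fun k _ => hC (T^[k] x)
  rw [birkhoffAverage, norm_smul, norm_inv, Real.norm_natCast, inv_mul_le_iff₀ (by positivity)]
  exact hsum

lemma isBoundedUnder_birkhoffAverage {f : α → ℝ} {C : ℝ} (hC : ∀ x, ‖f x‖ ≤ C) (x : α) :
    IsBoundedUnder (· ≤ ·) atTop (birkhoffAverage ℝ T f · x) ∧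
      IsBoundedUnder (· ≥ ·) atTop (birkhoffAverage ℝ T f · x) :=
  ⟨isBoundedUnder_of ⟨C, fun n => (abs_le.mp (norm_birkhoffAverage_le hC n x)).2⟩,
    isBoundedUnder_of ⟨-C, fun n => (abs_le.mp (norm_birkhoffAverage_le hC n x)).1⟩⟩

lemma liminf_birkhoffAverage_apply {f : α → ℝ} {C : ℝ} (hC : ∀ x, ‖f x‖ ≤ C) (x : α) :
    liminf (birkhoffAverage ℝ T f · (T x)) atTop = liminf (birkhoffAverage ℝ T f · x) atTop := by
  have hdiff := tendsto_birkhoffAverage_apply_sub_birkhoffAverage' ℝ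
    (isBounded_iff_forall_norm_le.mpr ⟨C, forall_mem_range.mpr hC⟩) T x
  refine le_antisymm (liminf_le_liminf_of_tendsto_sub (isBoundedUnder_birkhoffAverage hC _).1
    (isBoundedUnder_birkhoffAverage hC _).2 hdiff)
    (liminf_le_liminf_of_tendsto_sub (isBoundedUnder_birkhoffAverage hC _).1
      (isBoundedUnder_birkhoffAverage hC _).2 ?_)
  rw [← neg_sub, ← neg_zero]
  exact hdiff.neg

lemma limsup_birkhoffAverage_apply {f : α → ℝ} {C : ℝ} (hC : ∀ x, ‖f x‖ ≤ C) (x : α) :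
    limsup (birkhoffAverage ℝ T f · (T x)) atTop = limsup (birkhoffAverage ℝ T f · x) atTop := by
  have hdiff := tendsto_birkhoffAverage_apply_sub_birkhoffAverage' ℝ
    (isBounded_iff_forall_norm_le.mpr ⟨C, forall_mem_range.mpr hC⟩) T x
  refine le_antisymm (limsup_le_limsup_of_tendsto_sub (isBoundedUnder_birkhoffAverage hC _).1
    (isBoundedUnder_birkhoffAverage hC _).2 hdiff)
    (limsup_le_limsup_of_tendsto_sub (isBoundedUnder_birkhoffAverage hC _).1
      (isBoundedUnder_birkhoffAverage hC _).2 ?_)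
  rw [← neg_sub, ← neg_zero]
  exact hdiff.neg

lemma measurable_birkhoffAverage [MeasurableSpace α] {f : α → ℝ} (hT : Measurable T)
    (hf : Measurable f) (n : ℕ) :
    Measurable (birkhoffAverage ℝ T f n) := by
  unfold birkhoffAverage birkhoffSum
  exact (Finset.measurable_sum _ fun k _ => hf.comp (hT.iterate k)).const_smul ((n : ℝ)⁻¹)

end BirkhoffAverage

namespace MeasureTheory.MeasurePreserving

variable {α : Type*} [MeasurableSpace α] {μ : Measure α} {T : α → α} {f : α → ℝ} {C : ℝ}

lemma integral_comp_of_aestronglyMeasurable {β E : Type*} [MeasurableSpace β]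
    [NormedAddCommGroup E] [NormedSpace ℝ E] {ν : Measure β} {f : α → β}
    (hf : MeasurePreserving f μ ν) {g : β → E} (hg : AEStronglyMeasurable g ν) :
    ∫ x, g (f x) ∂μ = ∫ y, g y ∂ν := by
  rw [← hf.map_eq] at hg ⊢
  rw [integral_map hf.measurable.aemeasurable hg]

theorem maximal_ergodic_theorem (hT : MeasurePreserving T μ μ) {g : α → ℝ} (hgm : Measurable g)
    (hg : Integrable g μ) : 0 ≤ ∫ x in {x | ∃ n, 0 < birkhoffSum T g (n + 1) x}, g x ∂μ := by
  set M := birkhoffMax T g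
  set A : ℕ → Set α := fun n => {x | 0 < M (n + 1) x}
  have hA : ∀ n, MeasurableSet (A n) := fun n =>
    measurableSet_lt measurable_const (measurable_birkhoffMax hT.measurable hgm _)
  have hMT : ∀ n, Integrable (fun x => M n (T x)) μ := fun n =>
    hT.integrable_comp_of_integrable (integrable_birkhoffMax hT hg n)
  -- on `A n` the recursion gives `g = M (n + 1) - M n ∘ T`, while `M (n + 1)` vanishes off `A n`
  have hAn : ∀ n, 0 ≤ ∫ x in A n, g x ∂μ := by
    intro n
    have hg_eq : ∫ x in A n, g x ∂μ = ∫ x in A n, (M (n + 1) x - M n (T x)) ∂μ := by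
      refine setIntegral_congr_fun (hA n) fun x hx => ?_
      have : M (n + 1) x = g x + M n (T x) := by
        have hx : 0 < max 0 (g x + M n (T x)) := hx
        exact max_eq_right ((lt_max_iff.mp hx).resolve_left (lt_irrefl 0)).le
      linarith
    have hMA : ∫ x in A n, M (n + 1) x ∂μ = ∫ x, M (n + 1) x ∂μ := by
      refine setIntegral_eq_integral_of_forall_compl_eq_zero fun x hx => ?_
      exact le_antisymm (not_lt.mp hx) (birkhoffMax_nonneg T g _ x)
    have hMTA : ∫ x in A n, M n (T x) ∂μ ≤ ∫ x, M n (T x) ∂μ :=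
      setIntegral_le_integral (hMT n) (Eventually.of_forall fun x => birkhoffMax_nonneg T g n _)
    have hinv : ∫ x, M n (T x) ∂μ = ∫ x, M n x ∂μ :=
      hT.integral_comp_of_aestronglyMeasurable
        (measurable_birkhoffMax hT.measurable hgm n).aestronglyMeasurable
    have hmono : ∫ x, M n x ∂μ ≤ ∫ x, M (n + 1) x ∂μ :=
      integral_mono (integrable_birkhoffMax hT hg n) (integrable_birkhoffMax hT hg _)
        (birkhoffMax_le_succ T g n)
    rw [hg_eq, integral_sub (integrable_birkhoffMax hT hg _).integrableOn (hMT n).integrableOn]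
    linarith
  have hAmono : Monotone A := fun m n hmn x hx =>
    hx.trans_le (monotone_birkhoffMax T g (Nat.add_le_add_right hmn 1) x)
  rw [← iUnion_birkhoffMax_pos]
  exact ge_of_tendsto' (tendsto_setIntegral_of_monotone hA hAmono hg.integrableOn) hAn

lemma mul_measureReal_le_setIntegral (hT : MeasurePreserving T μ μ) [IsFiniteMeasure μ]
    (hfm : Measurable f) (hf : Integrable f μ) {G : Set α} (hGm : MeasurableSet G)
    (hG : T ⁻¹' G = G) {b : ℝ} (hb : ∀ x ∈ G, ∃ᶠ n in atTop, b < birkhoffAverage ℝ T f n x) :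
    b * μ.real G ≤ ∫ x in G, f x ∂μ := by
  set g := G.indicator fun x => f x - b
  have hpos : {x | ∃ n, 0 < birkhoffSum T g (n + 1) x} = G := by
    ext x
    simp only [g, birkhoffSum_indicator hG, mem_ofPred_eq]
    by_cases hx : x ∈ G
    · simp only [hx, indicator_of_mem, iff_true]
      obtain ⟨_, hn1, hn⟩ := frequently_atTop.mp (hb x hx) 1
      obtain ⟨n, rfl⟩ := Nat.exists_eq_add_of_le' hn1
      have hsum : birkhoffSum T (fun x => f x - b) (n + 1) x
          = (n + 1) * (birkhoffAverage ℝ T f (n + 1) x - b) := by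
        simp only [birkhoffSum, birkhoffAverage, Finset.sum_sub_distrib, Finset.sum_const,
          Finset.card_range, nsmul_eq_mul, smul_eq_mul, Nat.cast_succ]
        field_simp
      exact ⟨n, hsum ▸ mul_pos (by positivity) (sub_pos.mpr hn)⟩
    · simp [hx]
  have hmax := hT.maximal_ergodic_theorem (g := g) ((hfm.sub measurable_const).indicator hGm)
    ((hf.sub (integrable_const b)).indicator hGm)
  rw [hpos, setIntegral_indicator hGm, inter_self,
    integral_sub hf.integrableOn (integrable_const b), setIntegral_const, smul_eq_mul] at hmax
  linarith

lemma measure_liminf_lt_lt_limsup_birkhoffAverage_eq_zero (hT : MeasurePreserving T μ μ)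
    [IsFiniteMeasure μ] (hfm : Measurable f) (hC : ∀ x, ‖f x‖ ≤ C) {a b : ℝ} (hab : a < b) :
    μ {x | liminf (birkhoffAverage ℝ T f · x) atTop < a ∧
      b < limsup (birkhoffAverage ℝ T f · x) atTop} = 0 := by
  set G := {x | liminf (birkhoffAverage ℝ T f · x) atTop < a ∧
    b < limsup (birkhoffAverage ℝ T f · x) atTop}
  have hbdd := isBoundedUnder_birkhoffAverage (T := T) hC
  have hAm := measurable_birkhoffAverage hT.measurable hfm
  have hGm : MeasurableSet G :=
    (measurableSet_lt (Measurable.liminf hAm) measurable_const).inter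
      (measurableSet_lt measurable_const (Measurable.limsup hAm))
  have hG : T ⁻¹' G = G := by
    ext x
    simp only [G, mem_preimage, mem_ofPred_eq, liminf_birkhoffAverage_apply hC,
      limsup_birkhoffAverage_apply hC]
  have hupper : b * μ.real G ≤ ∫ x in G, f x ∂μ :=
    hT.mul_measureReal_le_setIntegral hfm (.of_bound hfm.aestronglyMeasurable C (.of_forall hC))
      hGm hG fun x hx => frequently_lt_of_lt_limsup (hbdd x).2.isCoboundedUnder_le hx.2
  have hlower : -a * μ.real G ≤ ∫ x in G, -f x ∂μ := by
    refine hT.mul_measureReal_le_setIntegral hfm.neg (.of_bound hfm.neg.aestronglyMeasurable C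
      (.of_forall fun x => (norm_neg (f x)).trans_le (hC x))) hGm hG fun x hx => ?_
    simpa only [birkhoffAverage_neg, Pi.neg_apply, neg_lt_neg_iff] using
      frequently_lt_of_liminf_lt (hbdd x).1.isCoboundedUnder_ge hx.1
  rw [integral_neg] at hlower
  have : μ.real G = 0 := by nlinarith [measureReal_nonneg (μ := μ) (s := G)]
  exact (measureReal_eq_zero_iff (measure_ne_top μ G)).mp this

theorem ae_exists_tendsto_birkhoffAverage (hT : MeasurePreserving T μ μ) [IsFiniteMeasure μ]
    (hfm : Measurable f) (hC : ∀ x, ‖f x‖ ≤ C) :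
    ∀ᵐ x ∂μ, ∃ c, Tendsto (birkhoffAverage ℝ T f · x) atTop (𝓝 c) := by
  have hosc : ∀ᵐ x ∂μ, ∀ p : {p : ℚ × ℚ // p.1 < p.2},
      ¬ (liminf (birkhoffAverage ℝ T f · x) atTop < p.1.1 ∧
        (p.1.2 : ℝ) < limsup (birkhoffAverage ℝ T f · x) atTop) :=
    ae_all_iff.mpr fun p => measure_eq_zero_iff_ae_notMem.mp
      (measure_liminf_lt_lt_limsup_birkhoffAverage_eq_zero hT hfm hC (by exact_mod_cast p.2))
  filter_upwards [hosc] with x hx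
  obtain ⟨hbdd, hbdd'⟩ := isBoundedUnder_birkhoffAverage (T := T) hC x
  refine ⟨_, tendsto_of_liminf_eq_limsup rfl ?_ hbdd hbdd'⟩
  refine le_antisymm ?_ (liminf_le_limsup hbdd hbdd')
  by_contra! hlt
  obtain ⟨q, hq, hqr⟩ := exists_rat_btwn hlt
  obtain ⟨r, hqr, hr⟩ := exists_rat_btwn hqr
  exact hx ⟨(q, r), by exact_mod_cast hqr⟩ ⟨hq, hr⟩

lemma integral_birkhoffAverage (hT : MeasurePreserving T μ μ) (hf : Integrable f μ) {n : ℕ}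
    (hn : n ≠ 0) : ∫ x, birkhoffAverage ℝ T f n x ∂μ = ∫ x, f x ∂μ := by
  have hiter : ∀ k, ∫ x, f (T^[k] x) ∂μ = ∫ x, f x ∂μ := fun k =>
    (hT.iterate k).integral_comp_of_aestronglyMeasurable hf.aestronglyMeasurable
  simp only [birkhoffAverage, birkhoffSum, smul_eq_mul]
  rw [integral_const_mul, integral_finsetSum (f := fun k x => f (T^[k] x)) _ fun k _ =>
    (hT.iterate k).integrable_comp_of_integrable hf]
  simp [hiter, hn]

end MeasureTheory.MeasurePreserving

lemma measurableSet_exists_tendsto_mem {α : Type*} [MeasurableSpace α] {u : ℕ → α → ℝ}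
    (hu : ∀ n, Measurable (u n)) {S : Set ℝ} (hS : MeasurableSet S) :
    MeasurableSet {x | ∃ ℓ ∈ S, Tendsto (u · x) atTop (𝓝 ℓ)} := by
  have : {x | ∃ ℓ ∈ S, Tendsto (u · x) atTop (𝓝 ℓ)} =
      {x | ∃ ℓ, Tendsto (u · x) atTop (𝓝 ℓ)} ∩ (fun x => liminf (u · x) atTop) ⁻¹' S := by
    ext x
    constructor
    · rintro ⟨ℓ, hℓS, hℓ⟩
      exact ⟨⟨ℓ, hℓ⟩, by simpa [hℓ.liminf_eq] using hℓS⟩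
    · rintro ⟨⟨ℓ, hℓ⟩, hS⟩
      exact ⟨ℓ, by simpa [hℓ.liminf_eq] using hS, hℓ⟩
  rw [this]
  exact (measurableSet_exists_tendsto hu).inter (Measurable.liminf hu hS)

lemma norm_indicator_one_le {α : Type*} (B : Set α) (y : α) :
    ‖B.indicator (fun _ => (1:ℝ)) y‖ ≤ 1 := by
  by_cases hy : y ∈ B <;> simp [hy]

section Flow

variable {X : Type*} {σ : ℝ → X → X} {φ : X → ℝ} {C : ℝ}

noncomputable def unitTimeIntegral (σ : ℝ → X → X) (φ : X → ℝ) (x : X) : ℝ :=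
  ∫ t in (0:ℝ)..1, φ (σ t x)

lemma iterate_flow_one (hσ0 : σ 0 = id)
    (hσadd : ∀ s t : ℝ, 0 ≤ s → 0 ≤ t → σ (s + t) = σ s ∘ σ t) (k : ℕ) :
    (σ 1)^[k] = σ k := by
  induction k with
  | zero => simp [hσ0]
  | succ k ih => rw [Function.iterate_succ', ih, ← hσadd 1 k zero_le_one k.cast_nonneg,
      Nat.cast_succ, add_comm]

lemma norm_unitTimeIntegral_le (hC : ∀ y, ‖φ y‖ ≤ C) (x : X) :
    ‖unitTimeIntegral σ φ x‖ ≤ C := by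
  simpa [unitTimeIntegral] using
    intervalIntegral.norm_integral_le_of_norm_le_const (a := 0) (b := 1) fun t _ => hC (σ t x)

lemma tendsto_timeAverage_indicator_flow_of_forall_notMem {B : Set X} {x : X}
    (h : ∀ t, 0 ≤ t → σ t x ∉ B) :
    Tendsto (timeAverage fun t => B.indicator (fun _ => (1:ℝ)) (σ t x)) atTop (𝓝 0) := by
  refine tendsto_const_nhds.congr' ?_
  filter_upwards [eventually_ge_atTop 0] with T hT
  rw [timeAverage, intervalIntegral.integral_congr (g := 0) fun t ht => ?_]
  · simp
  rw [uIcc_of_le hT] at ht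
  exact indicator_of_notMem (h t ht.1) _

variable [MeasurableSpace X]

lemma measurable_flow (hjm : Measurable fun p : ℝ × X => σ p.1 p.2) (t : ℝ) :
    Measurable (σ t) :=
  hjm.comp (measurable_const.prodMk measurable_id)

lemma measurable_comp_flow (hjm : Measurable fun p : ℝ × X => σ p.1 p.2) (hφ : Measurable φ)
    (x : X) : Measurable fun t => φ (σ t x) :=
  hφ.comp (hjm.comp (measurable_id.prodMk measurable_const))

lemma intervalIntegrable_comp_flow (hjm : Measurable fun p : ℝ × X => σ p.1 p.2)
    (hφ : Measurable φ) (hC : ∀ y, ‖φ y‖ ≤ C) (x : X) (a b : ℝ) :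
    IntervalIntegrable (fun t => φ (σ t x)) volume a b :=
  intervalIntegrable_of_norm_le (measurable_comp_flow hjm hφ x) (fun _ => hC _) a b

lemma birkhoffSum_unitTimeIntegral (hσ0 : σ 0 = id)
    (hσadd : ∀ s t : ℝ, 0 ≤ s → 0 ≤ t → σ (s + t) = σ s ∘ σ t)
    (hjm : Measurable fun p : ℝ × X => σ p.1 p.2) (hφ : Measurable φ) (hC : ∀ y, ‖φ y‖ ≤ C)
    (n : ℕ) (x : X) :
    birkhoffSum (σ 1) (unitTimeIntegral σ φ) n x = ∫ t in (0:ℝ)..n, φ (σ t x) := by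
  induction n with
  | zero => simp
  | succ n ih =>
    have hshift : unitTimeIntegral σ φ (σ n x) = ∫ t in (n:ℝ)..n + 1, φ (σ t x) :=
      calc ∫ t in (0:ℝ)..1, φ (σ t (σ n x)) = ∫ t in (0:ℝ)..1, φ (σ (t + n) x) :=
            intervalIntegral.integral_congr fun t ht => by
              rw [uIcc_of_le zero_le_one] at ht
              simp [hσadd t n ht.1 n.cast_nonneg]
        _ = ∫ t in (n:ℝ)..n + 1, φ (σ t x) := by
            simpa [add_comm] using intervalIntegral.integral_comp_add_right
              (fun t => φ (σ t x)) (n:ℝ) (a := 0) (b := 1)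
    rw [birkhoffSum_succ, ih, iterate_flow_one hσ0 hσadd, hshift, Nat.cast_succ,
      intervalIntegral.integral_add_adjacent_intervals
        (intervalIntegrable_comp_flow hjm hφ hC x _ _)
        (intervalIntegrable_comp_flow hjm hφ hC x _ _)]

lemma birkhoffAverage_unitTimeIntegral (hσ0 : σ 0 = id)
    (hσadd : ∀ s t : ℝ, 0 ≤ s → 0 ≤ t → σ (s + t) = σ s ∘ σ t)
    (hjm : Measurable fun p : ℝ × X => σ p.1 p.2) (hφ : Measurable φ) (hC : ∀ y, ‖φ y‖ ≤ C)
    (n : ℕ) (x : X) :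
    birkhoffAverage ℝ (σ 1) (unitTimeIntegral σ φ) n x = timeAverage (fun t => φ (σ t x)) n := by
  rw [birkhoffAverage, birkhoffSum_unitTimeIntegral hσ0 hσadd hjm hφ hC, timeAverage, one_div,
    smul_eq_mul]

lemma measurable_unitTimeIntegral (hjm : Measurable fun p : ℝ × X => σ p.1 p.2)
    (hφ : Measurable φ) : Measurable (unitTimeIntegral σ φ) := by
  have hprod : Measurable fun p : X × ℝ => φ (σ p.2 p.1) :=
    hφ.comp (hjm.comp measurable_swap)
  simp_rw [funext fun x => show unitTimeIntegral σ φ x = ∫ t in Ioc (0:ℝ) 1, φ (σ t x) from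
    intervalIntegral.integral_of_le zero_le_one]
  exact hprod.stronglyMeasurable.integral_prod_right'.measurable

lemma integral_unitTimeIntegral {ρ : Measure X} [IsFiniteMeasure ρ]
    (hjm : Measurable fun p : ℝ × X => σ p.1 p.2)
    (hmp : ∀ τ : ℝ, 0 ≤ τ → MeasurePreserving (σ τ) ρ ρ) (hφ : Measurable φ)
    (hC : ∀ y, ‖φ y‖ ≤ C) :
    ∫ x, unitTimeIntegral σ φ x ∂ρ = ∫ y, φ y ∂ρ := by
  have hprod : Integrable (Function.uncurry fun x t => φ (σ t x))
      (ρ.prod (volume.restrict (Ioc (0:ℝ) 1))) :=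
    .of_bound (hφ.comp (hjm.comp measurable_swap)).aestronglyMeasurable C
      (.of_forall fun _ => hC _)
  calc ∫ x, unitTimeIntegral σ φ x ∂ρ = ∫ x, (∫ t in Ioc (0:ℝ) 1, φ (σ t x)) ∂ρ := by
        simp_rw [unitTimeIntegral, intervalIntegral.integral_of_le zero_le_one]
    _ = ∫ t in Ioc (0:ℝ) 1, (∫ x, φ (σ t x) ∂ρ) := integral_integral_swap hprod
    _ = ∫ t in Ioc (0:ℝ) 1, (∫ y, φ y ∂ρ) :=
        setIntegral_congr_fun measurableSet_Ioc fun t ht =>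
          (hmp t ht.1.le).integral_comp_of_aestronglyMeasurable hφ.aestronglyMeasurable
    _ = ∫ y, φ y ∂ρ := by simp

theorem ae_exists_tendsto_timeAverage_flow {ρ : Measure X} [IsFiniteMeasure ρ] (hσ0 : σ 0 = id)
    (hσadd : ∀ s t : ℝ, 0 ≤ s → 0 ≤ t → σ (s + t) = σ s ∘ σ t)
    (hjm : Measurable fun p : ℝ × X => σ p.1 p.2)
    (hmp : ∀ τ : ℝ, 0 ≤ τ → MeasurePreserving (σ τ) ρ ρ) (hφ : Measurable φ)
    (hC : ∀ y, ‖φ y‖ ≤ C) :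
    ∀ᵐ x ∂ρ, ∃ c, Tendsto (timeAverage fun t => φ (σ t x)) atTop (𝓝 c) := by
  filter_upwards [(hmp 1 zero_le_one).ae_exists_tendsto_birkhoffAverage
    (measurable_unitTimeIntegral hjm hφ) (norm_unitTimeIntegral_le hC)] with x ⟨c, hc⟩
  refine ⟨c, tendsto_timeAverage_of_tendsto_nat (measurable_comp_flow hjm hφ x)
    (fun _ => hC _) ?_⟩
  simpa only [birkhoffAverage_unitTimeIntegral hσ0 hσadd hjm hφ hC] using hc

theorem ae_tendsto_timeAverage_flow_zero_or_pos {ρ : Measure X} [IsFiniteMeasure ρ]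
    (hσ0 : σ 0 = id) (hσadd : ∀ s t : ℝ, 0 ≤ s → 0 ≤ t → σ (s + t) = σ s ∘ σ t)
    (hjm : Measurable fun p : ℝ × X => σ p.1 p.2)
    (hmp : ∀ τ : ℝ, 0 ≤ τ → MeasurePreserving (σ τ) ρ ρ) (hφ : Measurable φ)
    (hC : ∀ y, ‖φ y‖ ≤ C) (hφ0 : ∀ y, 0 ≤ φ y) :
    ∀ᵐ x ∂ρ, Tendsto (timeAverage fun t => φ (σ t x)) atTop (𝓝 0) ∨
      ∃ ℓ, 0 < ℓ ∧ Tendsto (timeAverage fun t => φ (σ t x)) atTop (𝓝 ℓ) := by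
  filter_upwards [ae_exists_tendsto_timeAverage_flow hσ0 hσadd hjm hmp hφ hC] with x ⟨c, hc⟩
  have hc0 : 0 ≤ c := ge_of_tendsto hc <| (eventually_gt_atTop 0).mono fun T hT =>
    mul_nonneg (by positivity) (intervalIntegral.integral_nonneg hT.le fun t _ => hφ0 _)
  rcases hc0.eq_or_lt with rfl | hpos
  exacts [.inl hc, .inr ⟨c, hpos, hc⟩]

theorem integral_eq_of_ae_tendsto_timeAverage_flow {ρ : Measure X} [IsFiniteMeasure ρ]
    (hσ0 : σ 0 = id) (hσadd : ∀ s t : ℝ, 0 ≤ s → 0 ≤ t → σ (s + t) = σ s ∘ σ t)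
    (hjm : Measurable fun p : ℝ × X => σ p.1 p.2)
    (hmp : ∀ τ : ℝ, 0 ≤ τ → MeasurePreserving (σ τ) ρ ρ) (hφ : Measurable φ)
    (hC : ∀ y, ‖φ y‖ ≤ C) {g : X → ℝ}
    (hg : ∀ᵐ x ∂ρ, Tendsto (timeAverage fun t => φ (σ t x)) atTop (𝓝 (g x))) :
    ∫ x, g x ∂ρ = ∫ y, φ y ∂ρ := by
  have hT := hmp 1 zero_le_one
  have hF := measurable_unitTimeIntegral hjm hφ (σ := σ)
  have hconv : ∀ᵐ x ∂ρ, Tendsto (birkhoffAverage ℝ (σ 1) (unitTimeIntegral σ φ) · x) atTop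
      (𝓝 (g x)) := hg.mono fun x hx => by
    simpa only [Function.comp_def, birkhoffAverage_unitTimeIntegral hσ0 hσadd hjm hφ hC] using
      hx.comp tendsto_natCast_atTop_atTop
  have hlim := tendsto_integral_of_dominated_convergence (fun _ => C)
    (fun n => (measurable_birkhoffAverage hT.measurable hF n).aestronglyMeasurable)
    (integrable_const C)
    (fun n => .of_forall (norm_birkhoffAverage_le (norm_unitTimeIntegral_le hC) n)) hconv
  have hconst : ∀ᶠ n in atTop, ∫ x, birkhoffAverage ℝ (σ 1) (unitTimeIntegral σ φ) n x ∂ρ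
      = ∫ y, φ y ∂ρ := (eventually_ne_atTop 0).mono fun n hn => by
    rw [hT.integral_birkhoffAverage (.of_bound hF.aestronglyMeasurable C
      (.of_forall (norm_unitTimeIntegral_le hC))) hn, integral_unitTimeIntegral hjm hmp hφ hC]
  exact tendsto_nhds_unique hlim (tendsto_const_nhds.congr' (hconst.mono fun n h => h.symm))

lemma measurableSet_exists_tendsto_timeAverage_flow (hσ0 : σ 0 = id)
    (hσadd : ∀ s t : ℝ, 0 ≤ s → 0 ≤ t → σ (s + t) = σ s ∘ σ t)
    (hjm : Measurable fun p : ℝ × X => σ p.1 p.2) (hφ : Measurable φ) (hC : ∀ y, ‖φ y‖ ≤ C)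
    {S : Set ℝ} (hS : MeasurableSet S) :
    MeasurableSet {x | ∃ ℓ ∈ S, Tendsto (timeAverage fun t => φ (σ t x)) atTop (𝓝 ℓ)} := by
  have hset : {x | ∃ ℓ ∈ S, Tendsto (timeAverage fun t => φ (σ t x)) atTop (𝓝 ℓ)} =
      {x | ∃ ℓ ∈ S, Tendsto (birkhoffAverage ℝ (σ 1) (unitTimeIntegral σ φ) · x) atTop (𝓝 ℓ)} := by
    ext x
    simp only [mem_ofPred_eq, tendsto_timeAverage_iff_tendsto_nat (measurable_comp_flow hjm hφ x)
      (fun _ => hC _), birkhoffAverage_unitTimeIntegral hσ0 hσadd hjm hφ hC]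
  rw [hset]
  exact measurableSet_exists_tendsto_mem
    (measurable_birkhoffAverage (measurable_flow hjm 1) (measurable_unitTimeIntegral hjm hφ)) hS

lemma tendsto_timeAverage_flow_apply
    (hσadd : ∀ s t : ℝ, 0 ≤ s → 0 ≤ t → σ (s + t) = σ s ∘ σ t)
    (hjm : Measurable fun p : ℝ × X => σ p.1 p.2) (hφ : Measurable φ) (hC : ∀ y, ‖φ y‖ ≤ C)
    {x : X} {s ℓ : ℝ} (hs : 0 ≤ s) (h : Tendsto (timeAverage fun t => φ (σ t x)) atTop (𝓝 ℓ)) :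
    Tendsto (timeAverage fun t => φ (σ t (σ s x))) atTop (𝓝 ℓ) := by
  refine (tendsto_timeAverage_comp_add_const (intervalIntegrable_comp_flow hjm hφ hC x) s
    h).congr' ?_
  filter_upwards [eventually_ge_atTop 0] with T hT
  refine congrArg _ (intervalIntegral.integral_congr fun t ht => ?_)
  rw [uIcc_of_le hT] at ht
  simp [hσadd t s ht.1 hs]

lemma tendsto_timeAverage_indicator_flow_of_subset
    (hjm : Measurable fun p : ℝ × X => σ p.1 p.2) {B E : Set X} (hB : MeasurableSet B)
    (hE : MeasurableSet E) (hBE : B ⊆ E) {x : X}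
    (h : Tendsto (timeAverage fun t => E.indicator (fun _ => (1:ℝ)) (σ t x)) atTop (𝓝 0)) :
    Tendsto (timeAverage fun t => B.indicator (fun _ => (1:ℝ)) (σ t x)) atTop (𝓝 0) :=
  tendsto_timeAverage_zero_of_le
    (intervalIntegrable_comp_flow hjm (measurable_const.indicator hB) (norm_indicator_one_le B) x)
    (intervalIntegrable_comp_flow hjm (measurable_const.indicator hE) (norm_indicator_one_le E) x)
    (fun _ _ => indicator_nonneg (fun _ _ => zero_le_one) _)
    (fun _ _ => indicator_le_indicator_of_subset hBE (fun _ => zero_le_one) _) h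

end Flow

/-- Let `S_E⁺` (resp. `S_E⁰`) be the set of points whose mean sojourn time in `E` exists
and is positive (resp. exists and equals zero). Then the limit of the time averages of
the indicator of `E \ S_E⁺` vanishes `ρ`-a.e. on `S_E⁰ ∪ S_E⁺`, and consequently
`ρ(E \ S_E⁺) = 0`. -/
theorem stmt18 {X : Type*} [MeasurableSpace X]
    (ρ : Measure X) [IsProbabilityMeasure ρ]
    (σ : ℝ → X → X)
    (hσ0 : σ 0 = id)
    (hσadd : ∀ s t : ℝ, 0 ≤ s → 0 ≤ t → σ (s + t) = σ s ∘ σ t)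
    (hjm : Measurable fun p : ℝ × X => σ p.1 p.2)
    (hmp : ∀ τ : ℝ, 0 ≤ τ → MeasurePreserving (σ τ) ρ ρ)
    (E : Set X) (hE : MeasurableSet E)
    (SEp SE0 : Set X)
    (hSEp : SEp = {x : X | ∃ ℓ : ℝ, 0 < ℓ ∧
      Tendsto (fun T : ℝ =>
        (1 / T) * ∫ t in (0:ℝ)..T, E.indicator (fun _ => (1:ℝ)) (σ t x)) atTop (nhds ℓ)})
    (hSE0 : SE0 = {x : X |
      Tendsto (fun T : ℝ =>
        (1 / T) * ∫ t in (0:ℝ)..T, E.indicator (fun _ => (1:ℝ)) (σ t x)) atTop (nhds 0)}) :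
    (∀ᵐ x ∂ρ, x ∈ SE0 ∪ SEp →
      Tendsto (fun T : ℝ =>
        (1 / T) * ∫ t in (0:ℝ)..T, (E \ SEp).indicator (fun _ => (1:ℝ)) (σ t x))
        atTop (nhds 0)) ∧
    ρ (E \ SEp) = 0 := by
  have hmE : Measurable (E.indicator fun _ => (1:ℝ)) := measurable_const.indicator hE
  have hSEp_meas : MeasurableSet SEp := hSEp ▸ measurableSet_exists_tendsto_timeAverage_flow
    hσ0 hσadd hjm hmE (norm_indicator_one_le E) measurableSet_Ioi
  have hB : MeasurableSet (E \ SEp) := hE.diff hSEp_meas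
  have hpart : ∀ x ∈ SE0 ∪ SEp,
      Tendsto (timeAverage fun t => (E \ SEp).indicator (fun _ => (1:ℝ)) (σ t x)) atTop (𝓝 0) := by
    rintro x (hx | hx)
    · rw [hSE0] at hx
      exact tendsto_timeAverage_indicator_flow_of_subset hjm hB hE sdiff_subset hx
    -- `SEp` is forward invariant, so an orbit starting in `SEp` never visits `E \ SEp`
    · refine tendsto_timeAverage_indicator_flow_of_forall_notMem fun t ht hmem => hmem.2 ?_
      rw [hSEp] at hx ⊢
      obtain ⟨ℓ, hℓ, hx⟩ := hx
      exact ⟨ℓ, hℓ, tendsto_timeAverage_flow_apply hσadd hjm hmE (norm_indicator_one_le E) ht hx⟩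
  have hae : ∀ᵐ x ∂ρ, x ∈ SE0 ∪ SEp := by
    filter_upwards [ae_tendsto_timeAverage_flow_zero_or_pos hσ0 hσadd hjm hmp hmE
      (norm_indicator_one_le E) (fun _ => indicator_nonneg (fun _ _ => zero_le_one) _)] with x hx
    rwa [hSE0, hSEp]
  have hzero := integral_eq_of_ae_tendsto_timeAverage_flow hσ0 hσadd hjm hmp
    (measurable_const.indicator hB) (norm_indicator_one_le _) (g := fun _ => 0) (hae.mono hpart)
  rw [integral_zero, integral_indicator_const _ hB, smul_eq_mul, mul_one,
    eq_comm, measureReal_eq_zero_iff (measure_ne_top ρ _)] at hzero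
  exact ⟨.of_forall hpart, hzero⟩
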